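/- Suppose ω ∈ 𝒲. For all sufficiently small δ ∈ (0, m_τ) and any 0 < p < ∞, the normalized reproducing kernel satisfies |k_{p,z}(ζ)|^p · ω(ζ)^{p/2} ≍ τ(z)^{-2} for all ζ ∈ D_δ(z). -/

import Mathlib

open Complex Metric MeasureTheory

/-- `‖K_z‖_{A^p_ω} = (∫_𝔻 |K_z(ζ)|^p ω(ζ)^{p/2} dA(ζ))^{1/p}`. -/
noncomputable def apNormF (w : ℂ → ℝ) (K : ℂ → ℂ → ℂ) (p : ℝ) (z : ℂ) : ℝ :=
  (∫ ζ in ball (0:ℂ) 1, ‖K z ζ‖ ^ p * w ζ ^ (p/2)) ^ (1/p)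

/-!
Work with `=Θ` along the principal filter of the pairs `(z, ζ)` with `ζ ∈ D_δ(z)`, where it means
two-sided bounds with uniform constants. There `|K_z(ζ)| ≍ ‖K_z‖₂ ‖K_ζ‖₂
≍ ω(z)^{-1/2} τ(z)^{-1} ω(ζ)^{-1/2} τ(ζ)^{-1}`, and the Lipschitz bound on `τ` with `c₂ δ < 1`
gives `τ(ζ) ≍ τ(z)`. Dividing by `‖K_z‖_p ≍ ω(z)^{-1/2} τ(z)^{2(1-p)/p}` and raising to the
power `p`, the factor `ω(ζ)^{-p/2}` cancels against `ω(ζ)^{p/2}` and exactly `τ(z)^{-2}` is left.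
-/

open Asymptotics Filter

theorem isTheta_principal_iff_bounds {α : Type*} {s : Set α} {f g : α → ℝ}
    (hf : ∀ x ∈ s, 0 ≤ f x) (hg : ∀ x ∈ s, 0 ≤ g x) :
    f =Θ[𝓟 s] g ↔
      ∃ c C : ℝ, 0 < c ∧ 0 < C ∧ ∀ x ∈ s, c * g x ≤ f x ∧ f x ≤ C * g x := by
  have norms : ∀ x ∈ s, ‖f x‖ = f x ∧ ‖g x‖ = g x := fun x hx =>
    ⟨Real.norm_of_nonneg (hf x hx), Real.norm_of_nonneg (hg x hx)⟩
  simp only [IsTheta, isBigO_iff', eventually_principal]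
  constructor
  · rintro ⟨⟨C, hC, hfg⟩, ⟨c, hc, hgf⟩⟩
    refine ⟨c⁻¹, C, inv_pos.mpr hc, hC, fun x hx => ?_⟩
    have hfg := hfg x hx
    have hgf := hgf x hx
    rw [(norms x hx).1, (norms x hx).2] at hfg hgf
    exact ⟨by rwa [inv_mul_le_iff₀ hc], hfg⟩
  · rintro ⟨c, C, hc, hC, h⟩
    refine ⟨⟨C, hC, fun x hx => ?_⟩, ⟨c⁻¹, inv_pos.mpr hc, fun x hx => ?_⟩⟩ <;>
      rw [(norms x hx).1, (norms x hx).2]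
    · exact (h x hx).2
    · rw [← inv_mul_le_iff₀ (inv_pos.mpr hc), inv_inv]
      exact (h x hx).1

theorem apNormF_nonneg {w : ℂ → ℝ} (hw : ∀ ζ ∈ ball (0:ℂ) 1, 0 ≤ w ζ) (K : ℂ → ℂ → ℂ) (p : ℝ)
    (z : ℂ) : 0 ≤ apNormF w K p z :=
  Real.rpow_nonneg (setIntegral_nonneg measurableSet_ball fun ζ hζ =>
    mul_nonneg (Real.rpow_nonneg (norm_nonneg _) _) (Real.rpow_nonneg (hw ζ hζ) _)) _

theorem mul_le_and_le_mul_of_abs_sub_le {E : Type*} [SeminormedAddCommGroup E] {τ : E → ℝ}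
    {L δ : ℝ} {z ζ : E} (hL : 0 ≤ L) (hlip : |τ z - τ ζ| ≤ L * ‖z - ζ‖)
    (hd : ‖ζ - z‖ < δ * τ z) :
    (1 - L * δ) * τ z ≤ τ ζ ∧ τ ζ ≤ (1 + L * δ) * τ z := by
  have hdist : L * ‖z - ζ‖ ≤ L * (δ * τ z) := by
    rw [norm_sub_rev] at hd
    exact mul_le_mul_of_nonneg_left hd.le hL
  constructor <;> nlinarith [abs_le.mp (hlip.trans hdist)]

theorem rpow_kernel_ratio_eq {a t u p : ℝ} (ha : 0 < a) (ht : 0 < t) (hu : 0 < u) (hp : 0 < p) :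
    (a * t ^ (-1:ℝ) * (u ^ (-(1:ℝ)/2) * t ^ (-1:ℝ)) / (a * t ^ (2*(1-p)/p))) ^ p * u ^ (p/2)
      = t ^ (-(2:ℝ)) := by
  have hsimp : a * t ^ (-1:ℝ) * (u ^ (-(1:ℝ)/2) * t ^ (-1:ℝ)) / (a * t ^ (2*(1-p)/p))
      = u ^ (-(1:ℝ)/2) * t ^ (-2/p) := by
    rw [show (-2/p : ℝ) = -1 + -1 - 2*(1-p)/p by field_simp; ring,
      Real.rpow_sub ht, Real.rpow_add ht]
    field_simp
  rw [hsimp, Real.mul_rpow (by positivity) (by positivity), ← Real.rpow_mul hu.le,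
    ← Real.rpow_mul ht.le, mul_right_comm, ← Real.rpow_add hu]
  field_simp
  simp

def diskPairs (τ : ℂ → ℝ) (δ : ℝ) : Set (ℂ × ℂ) :=
  {q | q.1 ∈ ball (0:ℂ) 1 ∧ q.2 ∈ ball (0:ℂ) 1 ∧ ‖q.2 - q.1‖ < δ * τ q.1}

theorem isTheta_snd_fst_diskPairs {τ : ℂ → ℝ} {L δ : ℝ} (hL : 0 ≤ L) (hLδ : L * δ < 1)
    (hτ : ∀ z ∈ ball (0:ℂ) 1, 0 < τ z)
    (hlip : ∀ z ∈ ball (0:ℂ) 1, ∀ ζ ∈ ball (0:ℂ) 1, |τ z - τ ζ| ≤ L * ‖z - ζ‖) :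
    (fun q : ℂ × ℂ => τ q.2) =Θ[𝓟 (diskPairs τ δ)] fun q => τ q.1 :=
  (isTheta_principal_iff_bounds (fun q hq => (hτ _ hq.2.1).le) fun q hq => (hτ _ hq.1).le).mpr
    ⟨1 - L * δ, 2, by linarith, two_pos, fun q ⟨hz, hζ, hd⟩ =>
      have hτζ := mul_le_and_le_mul_of_abs_sub_le hL (hlip _ hz _ hζ) hd
      ⟨hτζ.1, hτζ.2.trans (by nlinarith [hτ _ hz])⟩⟩

section NormalizedKernel

variable {w τ : ℂ → ℝ} {K : ℂ → ℂ → ℂ} {p : ℝ}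

theorem isTheta_normalizedKernel {S : Set (ℂ × ℂ)} (hS : S ⊆ ball (0:ℂ) 1 ×ˢ ball (0:ℂ) 1)
    (hw : ∀ z ∈ ball (0:ℂ) 1, 0 < w z) (hτ : ∀ z ∈ ball (0:ℂ) 1, 0 < τ z) (hp : 0 < p)
    (hNp : apNormF w K p =Θ[𝓟 (ball 0 1)] fun z => w z ^ (-(1:ℝ)/2) * τ z ^ (2*(1-p)/p))
    (hN2 : apNormF w K 2 =Θ[𝓟 (ball 0 1)] fun z => w z ^ (-(1:ℝ)/2) * τ z ^ (-1:ℝ))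
    (hK : (fun q : ℂ × ℂ => ‖K q.1 q.2‖) =Θ[𝓟 S]
      fun q => apNormF w K 2 q.1 * apNormF w K 2 q.2)
    (hττ : (fun q : ℂ × ℂ => τ q.2) =Θ[𝓟 S] fun q => τ q.1) :
    (fun q : ℂ × ℂ => (‖K q.1 q.2‖ / apNormF w K p q.1) ^ p * w q.2 ^ (p/2))
      =Θ[𝓟 S] fun q => τ q.1 ^ (-(2:ℝ)) := by
  have hl : 𝓟 S ≤ 𝓟 (ball (0:ℂ) 1) ×ˢ 𝓟 (ball (0:ℂ) 1) := by
    rw [prod_principal_principal]; exact principal_mono.mpr hS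
  have hN : ∀ z, 0 ≤ apNormF w K p z := apNormF_nonneg (fun ζ hζ => (hw ζ hζ).le) K p
  have hτ_inv : (fun q : ℂ × ℂ => τ q.2 ^ (-1:ℝ)) =Θ[𝓟 S] fun q => τ q.1 ^ (-1:ℝ) :=
    hττ.rpow (eventually_principal.mpr fun q hq => (hτ _ (hS hq).2).le)
      (eventually_principal.mpr fun q hq => (hτ _ (hS hq).1).le)
  have hratio : (fun q : ℂ × ℂ => ‖K q.1 q.2‖ / apNormF w K p q.1) =Θ[𝓟 S] fun q =>
      w q.1 ^ (-(1:ℝ)/2) * τ q.1 ^ (-1:ℝ) * (w q.2 ^ (-(1:ℝ)/2) * τ q.1 ^ (-1:ℝ)) /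
        (w q.1 ^ (-(1:ℝ)/2) * τ q.1 ^ (2*(1-p)/p)) :=
    (hK.trans (((hN2.comp_fst _).mono hl).mul
      (((hN2.comp_snd _).mono hl).trans ((isTheta_refl _ _).mul hτ_inv)))).div
      ((hNp.comp_fst _).mono hl)
  refine ((hratio.rpow ?_ ?_).mul (isTheta_refl (fun q : ℂ × ℂ => w q.2 ^ (p/2)) _))
    |>.trans_eventuallyEq (eventually_principal.mpr fun q hq => ?_)
  · exact eventually_principal.mpr fun q _ => div_nonneg (norm_nonneg _) (hN _)
  · exact eventually_principal.mpr fun q hq => by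
      have := hw _ (hS hq).1; have := hw _ (hS hq).2; have := hτ _ (hS hq).1; positivity
  · exact rpow_kernel_ratio_eq (Real.rpow_pos_of_pos (hw _ (hS hq).1) _) (hτ _ (hS hq).1)
      (hw _ (hS hq).2) hp

end NormalizedKernel

theorem stmt8_general (w τ : ℂ → ℝ) (c₁ c₂ : ℝ) (hc₂ : 0 < c₂)
    (hw : ∀ z ∈ ball (0:ℂ) 1, 0 < w z)
    (hτpos : ∀ z ∈ ball (0:ℂ) 1, 0 < τ z)
    (h2 : ∀ z ∈ ball (0:ℂ) 1, ∀ ζ ∈ ball (0:ℂ) 1,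
      |τ z - τ ζ| ≤ c₂ * ‖z - ζ‖)
    (K : ℂ → ℂ → ℂ) (p : ℝ) (hp : 0 < p)
    (δ : ℝ) (hδ : δ < min 1 (min c₁⁻¹ c₂⁻¹) / 4)
    (hnorm : ∀ p' : ℝ, 0 < p' → ∃ c C : ℝ, 0 < c ∧ 0 < C ∧ ∀ z ∈ ball (0:ℂ) 1,
      c * w z ^ (-(1:ℝ)/2) * τ z ^ (2*(1-p')/p') ≤ apNormF w K p' z ∧
      apNormF w K p' z ≤ C * w z ^ (-(1:ℝ)/2) * τ z ^ (2*(1-p')/p'))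
    (hdiag : ∃ c C : ℝ, 0 < c ∧ 0 < C ∧ ∀ z ∈ ball (0:ℂ) 1, ∀ ζ ∈ ball (0:ℂ) 1,
      ‖ζ - z‖ < δ * τ z →
      c * apNormF w K 2 z * apNormF w K 2 ζ ≤ ‖K z ζ‖ ∧
      ‖K z ζ‖ ≤ C * apNormF w K 2 z * apNormF w K 2 ζ) :
    ∃ c C : ℝ, 0 < c ∧ 0 < C ∧ ∀ z ∈ ball (0:ℂ) 1, ∀ ζ ∈ ball (0:ℂ) 1,
      ‖ζ - z‖ < δ * τ z →
      c * τ z ^ (-(2:ℝ)) ≤ (‖K z ζ‖ / apNormF w K p z) ^ p * w ζ ^ (p/2) ∧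
      (‖K z ζ‖ / apNormF w K p z) ^ p * w ζ ^ (p/2) ≤ C * τ z ^ (-(2:ℝ)) := by
  have hN := apNormF_nonneg (fun ζ hζ => (hw ζ hζ).le) K
  have hNorm : ∀ p' > 0, apNormF w K p' =Θ[𝓟 (ball 0 1)]
      fun z => w z ^ (-(1:ℝ)/2) * τ z ^ (2*(1-p')/p') := fun p' hp' => by
    obtain ⟨c, C, hc, hC, h⟩ := hnorm p' hp'
    refine (isTheta_principal_iff_bounds (fun z _ => hN p' z) fun z hz => ?_).mpr
      ⟨c, C, hc, hC, fun z hz => by simpa only [mul_assoc] using h z hz⟩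
    have := hw z hz; have := hτpos z hz; positivity
  have hK : (fun q : ℂ × ℂ => ‖K q.1 q.2‖) =Θ[𝓟 (diskPairs τ δ)]
      fun q => apNormF w K 2 q.1 * apNormF w K 2 q.2 := by
    obtain ⟨c, C, hc, hC, h⟩ := hdiag
    exact (isTheta_principal_iff_bounds (fun _ _ => norm_nonneg _)
      fun q _ => mul_nonneg (hN 2 _) (hN 2 _)).mpr ⟨c, C, hc, hC, fun q ⟨hz, hζ, hd⟩ => by
        simpa only [mul_assoc] using h _ hz _ hζ hd⟩
  have hδc₂ : c₂ * δ < 1 := by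
    have hδ' : δ < c₂⁻¹ / 4 :=
      hδ.trans_le (by gcongr; exact (min_le_right _ _).trans (min_le_right _ _))
    calc c₂ * δ < c₂ * (c₂⁻¹ / 4) := mul_lt_mul_of_pos_left hδ' hc₂
      _ < 1 := by rw [mul_div_assoc', mul_inv_cancel₀ hc₂.ne']; norm_num
  have hmain := isTheta_normalizedKernel (fun q hq => ⟨hq.1, hq.2.1⟩) hw hτpos hp (hNorm p hp)
    (by convert hNorm 2 two_pos using 4; norm_num) hK
    (isTheta_snd_fst_diskPairs hc₂.le hδc₂ hτpos h2)
  obtain ⟨c, C, hc, hC, h⟩ := (isTheta_principal_iff_bounds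
    (fun q hq => by have := hN p q.1; have := hw _ hq.2.1; positivity)
    fun q hq => (Real.rpow_pos_of_pos (hτpos _ hq.1) _).le).mp hmain
  exact ⟨c, C, hc, hC, fun z hz ζ hζ hd => h (z, ζ) ⟨hz, hζ, hd⟩⟩

/-- For `ω ∈ 𝒲` (kernel estimates assumed), any `0 < p < ∞` and small `δ ∈ (0,m_τ)`:
`|k_{p,z}(ζ)|^p ω(ζ)^{p/2} ≍ τ(z)^{-2}` for `ζ ∈ D_δ(z)`. -/
theorem stmt8 (w τ : ℂ → ℝ) (c₁ c₂ : ℝ) (hc₁ : 0 < c₁) (hc₂ : 0 < c₂)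
    (hw : ∀ z ∈ ball (0:ℂ) 1, 0 < w z)
    (hτpos : ∀ z ∈ ball (0:ℂ) 1, 0 < τ z)
    (h1 : ∀ z ∈ ball (0:ℂ) 1, τ z ≤ c₁ * (1 - ‖z‖))
    (h2 : ∀ z ∈ ball (0:ℂ) 1, ∀ ζ ∈ ball (0:ℂ) 1,
      |τ z - τ ζ| ≤ c₂ * ‖z - ζ‖)
    (K : ℂ → ℂ → ℂ) (p : ℝ) (hp : 0 < p)
    (δ : ℝ) (hδ0 : 0 < δ) (hδ : δ < min 1 (min c₁⁻¹ c₂⁻¹) / 4)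
    (hnorm : ∀ p' : ℝ, 0 < p' → ∃ c C : ℝ, 0 < c ∧ 0 < C ∧ ∀ z ∈ ball (0:ℂ) 1,
      c * w z ^ (-(1:ℝ)/2) * τ z ^ (2*(1-p')/p') ≤ apNormF w K p' z ∧
      apNormF w K p' z ≤ C * w z ^ (-(1:ℝ)/2) * τ z ^ (2*(1-p')/p'))
    (hdiag : ∃ c C : ℝ, 0 < c ∧ 0 < C ∧ ∀ z ∈ ball (0:ℂ) 1, ∀ ζ ∈ ball (0:ℂ) 1,
      ‖ζ - z‖ < δ * τ z →
      c * apNormF w K 2 z * apNormF w K 2 ζ ≤ ‖K z ζ‖ ∧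
      ‖K z ζ‖ ≤ C * apNormF w K 2 z * apNormF w K 2 ζ) :
    ∃ c C : ℝ, 0 < c ∧ 0 < C ∧ ∀ z ∈ ball (0:ℂ) 1, ∀ ζ ∈ ball (0:ℂ) 1,
      ‖ζ - z‖ < δ * τ z →
      c * τ z ^ (-(2:ℝ)) ≤ (‖K z ζ‖ / apNormF w K p z) ^ p * w ζ ^ (p/2) ∧
      (‖K z ζ‖ / apNormF w K p z) ^ p * w ζ ^ (p/2) ≤ C * τ z ^ (-(2:ℝ)) :=
  stmt8_general w τ c₁ c₂ hc₂ hw hτpos h2 K p hp δ hδ hnorm hdiag
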